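/- If the homogeneous MAS with unstable agent dynamics A_a (A_a has at least one eigenvalue with nonnegative real part) is stabilized by a protocol of the form u = −(M ⊗ F_a)x, i.e., I_N ⊗ A_a − M ⊗ B_a F_a is Hurwitz, then M is nonsingular. -/

import Mathlib

open Matrix Kronecker

/-- All eigenvalues (over ℂ) have negative real part. -/
def Hurwitz {n : Type*} [Fintype n] [DecidableEq n] (M : Matrix n n ℝ) : Prop :=
  ∀ μ ∈ spectrum ℂ (M.map Complex.ofReal), μ.re < 0

namespace Matrix

variable {K l m n p : Type*}

theorem mem_spectrum_iff_exists_mulVec_eq_smul [Field K] [Fintype n] [DecidableEq n]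
    {A : Matrix n n K} {μ : K} : μ ∈ spectrum K A ↔ ∃ v ≠ 0, A *ᵥ v = μ • v := by
  rw [← spectrum_toLin', ← Module.End.hasEigenvalue_iff_mem_spectrum]
  constructor
  · intro h
    obtain ⟨v, hv, hv0⟩ := h.exists_hasEigenvector
    exact ⟨v, hv0, Module.End.mem_eigenspace_iff.1 hv⟩
  · rintro ⟨v, hv0, hv⟩
    exact Module.End.hasEigenvalue_of_hasEigenvector ⟨Module.End.mem_eigenspace_iff.2 hv, hv0⟩

theorem kronecker_mulVec_kronecker [CommSemiring K] [Fintype m] [Fintype p]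
    (A : Matrix l m K) (B : Matrix n p K) (x : m → K) (y : p → K) :
    (A ⊗ₖ B) *ᵥ (fun q => x q.1 * y q.2) = fun q => (A *ᵥ x) q.1 * (B *ᵥ y) q.2 := by
  funext q
  simp only [mulVec, dotProduct, Fintype.sum_prod_type, kroneckerMap_apply, Finset.sum_mul_sum]
  refine Finset.sum_congr rfl fun i _ => Finset.sum_congr rfl fun j _ => by ring

theorem isUnit_map_iff [Field K] {L : Type*} [Field L] [Fintype n] [DecidableEq n]
    (f : K →+* L) (M : Matrix n n K) : IsUnit (M.map f) ↔ IsUnit M := by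
  rw [isUnit_iff_isUnit_det, ← RingHom.mapMatrix_apply, ← RingHom.map_det, _root_.isUnit_map_iff,
    ← isUnit_iff_isUnit_det]

/-- If `M w = 0` and `A v = μ v`, then `w ⊗ v` is an eigenvector for `μ`. -/
theorem mem_spectrum_one_kronecker_sub_kronecker [Field K] [Fintype l] [DecidableEq l]
    [Fintype n] [DecidableEq n] {A : Matrix n n K} {μ : K} (hμ : μ ∈ spectrum K A)
    {M : Matrix l l K} (hM : ¬IsUnit M) (B : Matrix n n K) :
    μ ∈ spectrum K (1 ⊗ₖ A - M ⊗ₖ B) := by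
  obtain ⟨v, hv0, hAv⟩ := mem_spectrum_iff_exists_mulVec_eq_smul.1 hμ
  obtain ⟨w, hw0, hMw⟩ : ∃ w ≠ 0, M *ᵥ w = 0 := by
    rwa [exists_mulVec_eq_zero_iff, ← isUnit_iff_ne_zero.not_left, ← isUnit_iff_isUnit_det]
  refine mem_spectrum_iff_exists_mulVec_eq_smul.2 ⟨fun q => w q.1 * v q.2, ?_, ?_⟩
  · obtain ⟨i, hi⟩ := Function.ne_iff.1 hw0
    obtain ⟨j, hj⟩ := Function.ne_iff.1 hv0
    exact Function.ne_iff.2 ⟨(i, j), mul_ne_zero hi hj⟩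
  · rw [sub_mulVec, kronecker_mulVec_kronecker, kronecker_mulVec_kronecker, one_mulVec, hAv, hMw]
    funext q
    simp only [Pi.sub_apply, Pi.smul_apply, Pi.zero_apply, smul_eq_mul]
    ring

end Matrix

/-- If A_a is unstable (some eigenvalue with nonnegative real part)
and I_N ⊗ A_a − M ⊗ B_a F_a is Hurwitz, then M is nonsingular. -/
theorem stmt11 {N n m : ℕ} (Aa : Matrix (Fin n) (Fin n) ℝ)
    (Ba : Matrix (Fin n) (Fin m) ℝ) (Fa : Matrix (Fin m) (Fin n) ℝ)
    (M : Matrix (Fin N) (Fin N) ℝ)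
    (hunst : ∃ μ ∈ spectrum ℂ (Aa.map Complex.ofReal), 0 ≤ μ.re)
    (hH : Hurwitz ((1 : Matrix (Fin N) (Fin N) ℝ) ⊗ₖ Aa - M ⊗ₖ (Ba * Fa))) :
    IsUnit M := by
  obtain ⟨μ, hμ, hμ_re⟩ := hunst
  by_contra hM
  have hmap : ((1 : Matrix (Fin N) (Fin N) ℝ) ⊗ₖ Aa - M ⊗ₖ (Ba * Fa)).map Complex.ofReal =
      1 ⊗ₖ Aa.map Complex.ofReal - M.map Complex.ofReal ⊗ₖ (Ba * Fa).map Complex.ofReal := by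
    ext p q
    simp [one_apply, apply_ite Complex.ofReal]
  refine (hH μ ?_).not_ge hμ_re
  rw [hmap]
  exact mem_spectrum_one_kronecker_sub_kronecker hμ
    ((isUnit_map_iff Complex.ofRealHom M).not.2 hM) _
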